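/- Let r₁, r₂, r₃, r₄ be real numbers and let p(x) = (x − r₁)(x − r₂)(x − r₃)(x − r₄) = a₀ + a₁x + a₂x² + a₃x³ + x⁴. Then the three conditions a₀ < 0, a₂ = 0, and a₃ ≤ 0 hold if and only if: every rᵢ is nonzero, exactly one of the rᵢ is strictly negative, and (r₁, r₂, r₃, r₄) lies on the boundary of H(e_2^4), i.e., e_1^4(r₁,r₂,r₃,r₄) ≥ 0 and e_2^4(r₁,r₂,r₃,r₄) = 0. -/

import Mathlib

open Finset

/-- The elementary symmetric polynomial `e_ℓ^n`. -/
def Esymm {n : ℕ} (ℓ : ℕ) (x : Fin n → ℝ) : ℝ :=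
  ∑ S ∈ Finset.powersetCard ℓ (Finset.univ : Finset (Fin n)), ∏ i ∈ S, x i

set_option maxRecDepth 10000 in
lemma esymm_one (r : Fin 4 → ℝ) : Esymm 1 r = r 0 + r 1 + r 2 + r 3 := by
  rw [Esymm, show Finset.powersetCard 1 (Finset.univ : Finset (Fin 4)) = {{0},{1},{2},{3}} from
    by decide]
  simp; ring

set_option maxRecDepth 10000 in
lemma esymm_two (r : Fin 4 → ℝ) :
    Esymm 2 r = r 0 * r 1 + r 0 * r 2 + r 0 * r 3 + r 1 * r 2 + r 1 * r 3 + r 2 * r 3 := by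
  rw [Esymm, show Finset.powersetCard 2 (Finset.univ : Finset (Fin 4))
      = {{0,1},{0,2},{0,3},{1,2},{1,3},{2,3}} from by decide]
  rw [Finset.sum_insert (by decide), Finset.sum_insert (by decide),
    Finset.sum_insert (by decide), Finset.sum_insert (by decide),
    Finset.sum_insert (by decide), Finset.sum_singleton]
  rw [Finset.prod_insert (by decide), Finset.prod_insert (by decide),
    Finset.prod_insert (by decide), Finset.prod_insert (by decide),
    Finset.prod_insert (by decide), Finset.prod_insert (by decide)]
  simp [Finset.prod_singleton]; ring


lemma core (a b c d : ℝ) (he2 : a*b+a*c+a*d+b*c+b*d+c*d = 0) (he1 : 0 ≤ a+b+c+d) :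
    a*b*c*d < 0 ↔ (a ≠ 0 ∧ b ≠ 0 ∧ c ≠ 0 ∧ d ≠ 0 ∧
      ((if a < 0 then 1 else 0) + (if b < 0 then 1 else 0) + (if c < 0 then 1 else 0)
        + (if d < 0 then 1 else 0) = (1:ℕ))) := by
  constructor
  · intro hprod
    have hA : a ≠ 0 := by intro h; rw [h] at hprod; simp at hprod
    have hB : b ≠ 0 := by intro h; rw [h] at hprod; simp at hprod
    have hC : c ≠ 0 := by intro h; rw [h] at hprod; simp at hprod
    have hD : d ≠ 0 := by intro h; rw [h] at hprod; simp at hprod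
    refine ⟨hA, hB, hC, hD, ?_⟩
    rcases hA.lt_or_gt with ha | ha <;> rcases hB.lt_or_gt with hb | hb <;>
      rcases hC.lt_or_gt with hc | hc <;> rcases hD.lt_or_gt with hd | hd <;>
      simp only [ha, hb, hc, hd, ha.not_gt, hb.not_gt, hc.not_gt, hd.not_gt,
        if_true, if_false, iff_true, iff_false] <;>
      first
      | rfl
      | (norm_num; done)
      | (exfalso; first
          | nlinarith [mul_pos (mul_pos (mul_pos ha hb) hc) hd]
          | nlinarith [mul_pos (mul_pos_of_neg_of_neg ha hb) (mul_pos hc hd)]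
          | nlinarith [mul_pos (mul_pos_of_neg_of_neg ha hc) (mul_pos hb hd)]
          | nlinarith [mul_pos (mul_pos_of_neg_of_neg ha hd) (mul_pos hb hc)]
          | nlinarith [mul_pos (mul_pos_of_neg_of_neg hb hc) (mul_pos ha hd)]
          | nlinarith [mul_pos (mul_pos_of_neg_of_neg hb hd) (mul_pos ha hc)]
          | nlinarith [mul_pos (mul_pos_of_neg_of_neg hc hd) (mul_pos ha hb)]
          | nlinarith [mul_pos (mul_pos_of_neg_of_neg ha hb) (mul_pos_of_neg_of_neg hc hd)]
          | nlinarith [mul_pos_of_neg_of_neg ha hb, mul_pos_of_neg_of_neg ha hc,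
              mul_pos_of_neg_of_neg hb hc, mul_nonneg he1 (by linarith : (0:ℝ) ≤ -(a+b+c)),
              sq_nonneg a, sq_nonneg b, sq_nonneg c]
          | nlinarith [mul_pos_of_neg_of_neg ha hb, mul_pos_of_neg_of_neg ha hd,
              mul_pos_of_neg_of_neg hb hd, mul_nonneg he1 (by linarith : (0:ℝ) ≤ -(a+b+d)),
              sq_nonneg a, sq_nonneg b, sq_nonneg d]
          | nlinarith [mul_pos_of_neg_of_neg ha hc, mul_pos_of_neg_of_neg ha hd,
              mul_pos_of_neg_of_neg hc hd, mul_nonneg he1 (by linarith : (0:ℝ) ≤ -(a+c+d)),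
              sq_nonneg a, sq_nonneg c, sq_nonneg d]
          | nlinarith [mul_pos_of_neg_of_neg hb hc, mul_pos_of_neg_of_neg hb hd,
              mul_pos_of_neg_of_neg hc hd, mul_nonneg he1 (by linarith : (0:ℝ) ≤ -(b+c+d)),
              sq_nonneg b, sq_nonneg c, sq_nonneg d])
  · rintro ⟨hA, hB, hC, hD, hcnt⟩
    rcases hA.lt_or_gt with ha | ha <;> rcases hB.lt_or_gt with hb | hb <;>
      rcases hC.lt_or_gt with hc | hc <;> rcases hD.lt_or_gt with hd | hd <;>
      first
      | nlinarith [ha, mul_pos (mul_pos hb hc) hd]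
      | nlinarith [hb, mul_pos (mul_pos ha hc) hd]
      | nlinarith [hc, mul_pos (mul_pos ha hb) hd]
      | nlinarith [hd, mul_pos (mul_pos ha hb) hc]
      | (exfalso; revert hcnt;
         simp [ha, hb, hc, hd, ha.not_gt, hb.not_gt, hc.not_gt, hd.not_gt]; done)


theorem stmt16 (r : Fin 4 → ℝ) (a₀ a₁ a₂ a₃ : ℝ)
    (hp : ∀ x : ℝ, ∏ i, (x - r i) = a₀ + a₁ * x + a₂ * x ^ 2 + a₃ * x ^ 3 + x ^ 4) :
    (a₀ < 0 ∧ a₂ = 0 ∧ a₃ ≤ 0) ↔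
      ((∀ i, r i ≠ 0) ∧
       (Finset.univ.filter fun i => r i < 0).card = 1 ∧
       0 ≤ Esymm 1 r ∧ Esymm 2 r = 0) := by
  simp only [Fin.prod_univ_four] at hp
  have ha0 : a₀ = r 0 * r 1 * r 2 * r 3 := by linear_combination -hp 0
  have ha2 : a₂ = r 0 * r 1 + r 0 * r 2 + r 0 * r 3 + r 1 * r 2 + r 1 * r 3 + r 2 * r 3 := by
    linear_combination -(hp 2 + hp (-2) - hp 1 - hp (-1)) / 6
  have ha3 : a₃ = -(r 0 + r 1 + r 2 + r 3) := by
    linear_combination -(hp 2 - hp (-2) - 2 * hp 1 + 2 * hp (-1)) / 12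
  have hcard : (Finset.univ.filter fun i => r i < 0).card
      = (if r 0 < 0 then 1 else 0) + (if r 1 < 0 then 1 else 0) + (if r 2 < 0 then 1 else 0)
        + (if r 3 < 0 then 1 else 0) := by
    rw [Finset.card_filter, Fin.sum_univ_four]
  have hall : (∀ i, r i ≠ 0) ↔ (r 0 ≠ 0 ∧ r 1 ≠ 0 ∧ r 2 ≠ 0 ∧ r 3 ≠ 0) :=
    ⟨fun h => ⟨h 0, h 1, h 2, h 3⟩, fun ⟨h0, h1, h2, h3⟩ i => by fin_cases i <;> assumption⟩
  rw [esymm_one, esymm_two, ha0, ha2, ha3, hcard, hall]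
  constructor
  · rintro ⟨h0, h2, h3⟩
    have he1 : 0 ≤ r 0 + r 1 + r 2 + r 3 := by linarith
    obtain ⟨hA, hB, hC, hD, hcnt⟩ := (core _ _ _ _ h2 he1).1 h0
    exact ⟨⟨hA, hB, hC, hD⟩, hcnt, he1, h2⟩
  · rintro ⟨⟨hA, hB, hC, hD⟩, hcnt, he1, he2⟩
    exact ⟨(core _ _ _ _ he2 he1).2 ⟨hA, hB, hC, hD, hcnt⟩, he2, by linarith⟩
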